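/- If G is a harmonic homogeneous polynomial (Δ(G)=0) of degree m−2i in the Plücker variables, then Δ(G·Qⁱ) = i(m+2−i)·G·Q^{i−1} for all i ≥ 1. -/
import Mathlib

open MvPolynomial

/- Variable convention: `0 ↔ p₀₁, 1 ↔ p₀₂, 2 ↔ p₀₃, 3 ↔ p₁₂, 4 ↔ p₁₃, 5 ↔ p₂₃`. -/

/-- The Plücker quadric (Pfaffian) `Q = p₀₁p₂₃ − p₀₂p₁₃ + p₀₃p₁₂`. -/
noncomputable def Qp : MvPolynomial (Fin 6) ℂ := X 0 * X 5 - X 1 * X 4 + X 2 * X 3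

/-- The Laplace operator `Δ = ∂²/∂p₀₁∂p₂₃ − ∂²/∂p₀₂∂p₁₃ + ∂²/∂p₀₃∂p₁₂`. -/
noncomputable def lap (F : MvPolynomial (Fin 6) ℂ) : MvPolynomial (Fin 6) ℂ :=
  pderiv 5 (pderiv 0 F) - pderiv 4 (pderiv 1 F) + pderiv 3 (pderiv 2 F)

/-- The Cayley bracket `{F,G} = ⟨∇F, ∇G⟩`, the symmetric pairing of gradients
via the Pfaffian form. -/
noncomputable def cbrk (F G : MvPolynomial (Fin 6) ℂ) : MvPolynomial (Fin 6) ℂ :=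
  pderiv 0 F * pderiv 5 G + pderiv 5 F * pderiv 0 G
  - pderiv 1 F * pderiv 4 G - pderiv 4 F * pderiv 1 G
  + pderiv 2 F * pderiv 3 G + pderiv 3 F * pderiv 2 G

lemma dQ0 : pderiv 0 Qp = X 5 := by simp [Qp, pderiv_X]
lemma dQ1 : pderiv 1 Qp = -X 4 := by simp [Qp, pderiv_X]
lemma dQ2 : pderiv 2 Qp = X 3 := by simp [Qp, pderiv_X]
lemma dQ3 : pderiv 3 Qp = X 2 := by simp [Qp, pderiv_X]
lemma dQ4 : pderiv 4 Qp = -X 1 := by simp [Qp, pderiv_X]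
lemma dQ5 : pderiv 5 Qp = X 0 := by simp [Qp, pderiv_X]

lemma lap_mul (F G : MvPolynomial (Fin 6) ℂ) :
    lap (F * G) = lap F * G + F * lap G + cbrk F G := by
  simp only [lap, cbrk, pderiv_mul, map_add]
  ring

lemma euler_mono (s : Fin 6 →₀ ℕ) (a : ℂ) (j : Fin 6) :
    X j * pderiv j (monomial s a) = (s j : ℂ) • monomial s a := by
  rw [pderiv_monomial]
  rcases Nat.eq_zero_or_pos (s j) with h | h
  · simp [h]
  · have hs : Finsupp.single j 1 + (s - Finsupp.single j 1) = s := by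
      ext k
      rcases eq_or_ne k j with rfl | hk
      · simp [Nat.add_sub_cancel' h]
      · simp [Finsupp.single_apply, Ne.symm hk]
    rw [X, monomial_mul, hs, smul_monomial]
    congr 1
    rw [smul_eq_mul]; ring

lemma euler {n : ℕ} {F : MvPolynomial (Fin 6) ℂ} (hF : F.IsHomogeneous n) :
    ∑ j : Fin 6, X j * pderiv j F = (n : ℂ) • F := by
  conv_lhs => rw [F.as_sum]
  simp only [map_sum, Finset.mul_sum]
  rw [Finset.sum_comm]
  conv_rhs => rw [F.as_sum, Finset.smul_sum]
  refine Finset.sum_congr rfl fun v hv => ?_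
  have hdeg : ∑ j : Fin 6, v j = n := by
    have := hF (mem_support_iff.mp hv)
    rw [Finsupp.weight_apply, Finsupp.sum_fintype] at this
    · simpa using this
    · intro; simp
  calc ∑ j : Fin 6, X j * pderiv j (monomial v (coeff v F))
      = ∑ j : Fin 6, ((v j : ℂ)) • monomial v (coeff v F) := by
        simp only [euler_mono]
    _ = (n : ℂ) • monomial v (coeff v F) := by
        rw [← Finset.sum_smul]; congr 1; rw [← hdeg]; push_cast; ring

/-- `{G, Q} = (deg G) • G` for homogeneous `G`, by Euler's identity. -/
lemma cbrk_Qp {n : ℕ} {G : MvPolynomial (Fin 6) ℂ} (hG : G.IsHomogeneous n) :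
    cbrk G Qp = (n : ℂ) • G := by
  have h := euler hG
  rw [Fin.sum_univ_six] at h
  rw [cbrk, dQ0, dQ1, dQ2, dQ3, dQ4, dQ5, ← h]
  ring

lemma cbrk_symm (F G : MvPolynomial (Fin 6) ℂ) : cbrk F G = cbrk G F := by
  rw [cbrk, cbrk]; ring

lemma cbrk_Qp_pow (G : MvPolynomial (Fin 6) ℂ) (i : ℕ) :
    cbrk G (Qp ^ i) = (i : MvPolynomial (Fin 6) ℂ) * Qp ^ (i - 1) * cbrk G Qp := by
  simp only [cbrk, pderiv_pow]
  ring

lemma cbrk_Qp_Qp : cbrk Qp Qp = 2 * Qp := by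
  rw [cbrk, dQ0, dQ1, dQ2, dQ3, dQ4, dQ5, Qp]
  ring

lemma lap_Qp : lap Qp = 3 := by
  rw [lap, dQ0, dQ1, dQ2]
  simp [pderiv_X]
  norm_num

lemma lap_Qp_pow (i : ℕ) (hi : 1 ≤ i) :
    lap (Qp ^ i) = C ((i : ℂ) * ((i : ℂ) + 2)) * Qp ^ (i - 1) := by
  induction i with
  | zero => omega
  | succ k ih =>
    rcases Nat.eq_zero_or_pos k with rfl | hk
    · rw [pow_one, pow_zero, lap_Qp]
      simp only [map_mul, map_add, map_ofNat, map_natCast]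
      push_cast
      ring
    · have hik := ih hk
      rw [pow_succ, lap_mul, hik, cbrk_symm, cbrk_Qp_pow, cbrk_Qp_Qp, lap_Qp]
      have h1 : k - 1 + 1 = k := Nat.succ_pred_eq_of_pos hk
      have h2 : (k + 1 : ℕ) - 1 = k := rfl
      rw [h2, ← h1, pow_succ]
      simp only [map_mul, map_add, map_ofNat, map_natCast]
      push_cast [h1]
      ring

/-- if `G` is harmonic homogeneous of degree `m − 2i`, then
`Δ(G·Qⁱ) = i(m+2−i)·G·Q^{i−1}` for all `i ≥ 1`. -/
theorem stmt7 (m i : ℕ) (hi : 1 ≤ i) (h2i : 2 * i ≤ m)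
    (G : MvPolynomial (Fin 6) ℂ) (hG : G.IsHomogeneous (m - 2 * i))
    (hharm : lap G = 0) :
    lap (G * Qp ^ i) =
      C ((i : ℂ) * ((m : ℂ) + 2 - (i : ℂ))) * (G * Qp ^ (i - 1)) := by
  rw [lap_mul, hharm, lap_Qp_pow i hi, cbrk_Qp_pow, cbrk_Qp hG]
  have hcast : ((m - 2 * i : ℕ) : ℂ) = (m : ℂ) - 2 * i := by
    push_cast [h2i]; ring
  simp only [smul_eq_C_mul, hcast, map_mul, map_add, map_sub, map_ofNat, map_natCast]
  ring
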